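/- arXiv:2304.11515 — 7 statements merged into one kernel-verified Lean document; each statement's English description precedes it below -/
import Mathlib

section
/- Let (X, μ) be a finite measure space and {A_n} a sequence of measurable sets with ∑_{n=1}^∞ μ(A_n) = +∞ and liminf_{N→∞} (∑_{1≤m,n≤N} μ(A_n ∩ A_m)) / (∑_{n=1}^N μ(A_n))² < +∞. Then the set of points belonging to infinitely many of the A_n has positive μ-measure. -/
open MeasureTheory Filter Topology
open scoped ENNReal

private lemma ks_limsup_measure_le {X : Type*} [MeasurableSpace X] (μ : Measure X)
    [IsFiniteMeasure μ] (B : ℕ → Set X) (hB : ∀ n, MeasurableSet (B n)) :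
    limsup (fun N => μ (B N)) atTop ≤ μ (limsup B atTop) := by
  have hset : limsup B atTop = ⋂ k, ⋃ i, ⋃ _ : k ≤ i, B i := by
    rw [limsup_eq_iInf_iSup_of_nat]
    simp only [Set.iInf_eq_iInter, Set.iSup_eq_iUnion]
  rw [hset]
  have hanti : Antitone (fun k => ⋃ i, ⋃ _ : k ≤ i, B i) := by
    intro a b hab
    exact Set.iUnion₂_mono' fun i hi => ⟨i, le_trans hab hi, subset_rfl⟩
  rw [hanti.measure_iInter (fun k => (MeasurableSet.iUnion fun i =>
      MeasurableSet.iUnion fun _ => hB i).nullMeasurableSet)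
      ⟨0, measure_ne_top μ _⟩]
  rw [limsup_eq_iInf_iSup_of_nat]
  exact le_iInf fun k => iInf_le_of_le k (iSup₂_le fun i hi =>
    measure_mono (Set.subset_iUnion₂ (s := fun i _ => B i) i hi))

private lemma ks_cauchy_schwarz {X : Type*} [MeasurableSpace X] (μ : Measure X) (f : X → ℝ≥0∞)
    (hf : Measurable f) (B : Set X) (hB : MeasurableSet B) :
    (∫⁻ x, B.indicator f x ∂μ) ^ 2 ≤ (∫⁻ x, f x ^ 2 ∂μ) * μ B := by
  have h1 : ∀ x, B.indicator f x = f x * B.indicator (1 : X → ℝ≥0∞) x := by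
    intro x; by_cases hx : x ∈ B <;> simp [hx]
  have hconj : Real.HolderConjugate 2 2 := Real.holderConjugate_iff.mpr ⟨one_lt_two, by norm_num⟩
  have hCS := ENNReal.lintegral_mul_le_Lp_mul_Lq μ hconj hf.aemeasurable
    ((measurable_one.indicator hB).aemeasurable)
  have hg : (∫⁻ x, B.indicator (1 : X → ℝ≥0∞) x ^ (2:ℝ) ∂μ) = μ B := by
    have : ∀ x, B.indicator (1 : X → ℝ≥0∞) x ^ (2:ℝ) = B.indicator 1 x := by
      intro x; by_cases hx : x ∈ B <;> simp [hx, ENNReal.zero_rpow_of_pos]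
    simp only [this]
    exact lintegral_indicator_one hB
  rw [hg] at hCS
  have hf2 : ∀ x, f x ^ (2:ℝ) = f x ^ 2 := fun x => by
    rw [show ((2:ℝ)) = ((2:ℕ):ℝ) by norm_num, ENNReal.rpow_natCast]
  simp only [hf2] at hCS
  calc (∫⁻ x, B.indicator f x ∂μ) ^ 2
      = (∫⁻ x, f x * B.indicator (1 : X → ℝ≥0∞) x ∂μ) ^ 2 := by simp only [h1]
    _ ≤ ((∫⁻ x, f x ^ 2 ∂μ) ^ (1/2:ℝ) * μ B ^ (1/2:ℝ)) ^ 2 := pow_le_pow_left' hCS 2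
    _ = (∫⁻ x, f x ^ 2 ∂μ) * μ B := by
        rw [mul_pow, ← ENNReal.rpow_natCast (_ ^ (1/2:ℝ)), ← ENNReal.rpow_natCast (μ B ^ (1/2:ℝ)),
          ← ENNReal.rpow_mul, ← ENNReal.rpow_mul]
        norm_num

/-- Kochen–Stone variant of the Borel–Cantelli lemma. -/
theorem kochen_stone_borel_cantelli {X : Type*} [MeasurableSpace X] (μ : Measure X)
    [IsFiniteMeasure μ] (A : ℕ → Set X) (hA : ∀ n, MeasurableSet (A n))
    (hdiv : (∑' n, μ (A n)) = ⊤)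
    (hliminf : Filter.liminf
      (fun N : ℕ => (∑ m ∈ Finset.range N, ∑ n ∈ Finset.range N, μ (A n ∩ A m)) /
        (∑ n ∈ Finset.range N, μ (A n)) ^ 2) Filter.atTop < ⊤) :
    0 < μ (Filter.limsup A Filter.atTop) := by
  set S : ℕ → ℝ≥0∞ := fun N => ∑ n ∈ Finset.range N, μ (A n) with hS_def
  set T : ℕ → ℝ≥0∞ := fun N =>
    ∑ m ∈ Finset.range N, ∑ n ∈ Finset.range N, μ (A n ∩ A m) with hT_def
  set f : ℕ → X → ℝ≥0∞ := fun N x => ∑ n ∈ Finset.range N, (A n).indicator 1 x with hf_def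
  set m : ℝ≥0∞ := μ Set.univ with hm_def
  have hm_ne_top : m ≠ ⊤ := measure_ne_top μ _
  have hm_ne_zero : m ≠ 0 := by
    intro h
    apply ENNReal.top_ne_zero
    rw [← hdiv]
    refine ENNReal.tsum_eq_zero.2 fun n => le_antisymm ?_ zero_le
    rw [← h]; exact measure_mono (Set.subset_univ _)
  have hS_ne_top : ∀ N, S N ≠ ⊤ :=
    fun N => (ENNReal.sum_lt_top.2 fun n _ => measure_lt_top μ _).ne
  have hT_ne_top : ∀ N, T N ≠ ⊤ :=
    fun N => (ENNReal.sum_lt_top.2 fun a _ =>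
      ENNReal.sum_lt_top.2 fun b _ => measure_lt_top μ _).ne
  have hf_meas : ∀ N, Measurable (f N) :=
    fun N => Finset.measurable_sum _ (fun n _ => measurable_one.indicator (hA n))
  -- S N → ⊤
  have hS_top : Tendsto S atTop (𝓝 ⊤) := by
    rw [← hdiv]; exact ENNReal.tendsto_nat_tsum _
  -- cutoff
  set c : ℕ → ℝ≥0∞ := fun N => S N / (2 * m) with hc_def
  have hc_top : Tendsto c atTop (𝓝 ⊤) := by
    have h2m : (2 * m) ≠ 0 := mul_ne_zero two_ne_zero hm_ne_zero
    have h2m' : (2 * m) ≠ ⊤ := ENNReal.mul_ne_top (by norm_num) hm_ne_top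
    simp only [hc_def, div_eq_mul_inv]
    have := ENNReal.Tendsto.mul_const (b := (2*m)⁻¹) hS_top
      (Or.inr (ENNReal.inv_ne_top.2 h2m))
    rwa [ENNReal.top_mul (ENNReal.inv_ne_zero.2 h2m')] at this
  set B : ℕ → Set X := fun N => {x | c N < f N x} with hB_def
  have hB_meas : ∀ N, MeasurableSet (B N) :=
    fun N => measurableSet_lt measurable_const (hf_meas N)
  -- integrals
  have hint1 : ∀ N, (∫⁻ x, f N x ∂μ) = S N := by
    intro N
    rw [lintegral_finset_sum _ (fun n _ => (measurable_one.indicator (hA n)))]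
    simp [lintegral_indicator_one (hA _)]
    rfl
  have hint2 : ∀ N, (∫⁻ x, f N x ^ 2 ∂μ) = T N := by
    intro N
    have hpt : ∀ x, (f N x) ^ 2
        = ∑ m' ∈ Finset.range N, ∑ n ∈ Finset.range N,
            (A n ∩ A m').indicator (1 : X → ℝ≥0∞) x := by
      intro x
      rw [hf_def, sq, Finset.sum_mul_sum]
      refine Finset.sum_congr rfl fun m' _ => Finset.sum_congr rfl fun n _ => ?_
      rw [Set.inter_indicator_one]
      by_cases hm' : x ∈ A m' <;> by_cases hn : x ∈ A n <;> simp [hm', hn]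
    simp only [hpt]
    rw [lintegral_finset_sum _ (fun m' _ => Finset.measurable_sum _
      (fun n _ => measurable_one.indicator ((hA n).inter (hA m'))))]
    refine Finset.sum_congr rfl fun m' _ => ?_
    rw [lintegral_finset_sum _ (fun n _ => measurable_one.indicator ((hA n).inter (hA m')))]
    exact Finset.sum_congr rfl fun n _ => lintegral_indicator_one ((hA n).inter (hA m'))
  -- Paley–Zygmund type inequality: (S N / 2)^2 ≤ T N * μ (B N)
  have hkey : ∀ N, (S N / 2) ^ 2 ≤ T N * μ (B N) := by
    intro N
    have hptwise : ∀ x, f N x ≤ c N + (B N).indicator (f N) x := by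
      intro x
      by_cases hx : x ∈ B N
      · simp only [Set.indicator_of_mem hx]
        exact le_add_self
      · simp only [Set.indicator_of_notMem hx, add_zero]
        exact not_lt.1 hx
    have hstep : S N ≤ S N / 2 + ∫⁻ x, (B N).indicator (f N) x ∂μ := by
      calc S N = ∫⁻ x, f N x ∂μ := (hint1 N).symm
        _ ≤ ∫⁻ x, c N + (B N).indicator (f N) x ∂μ := lintegral_mono hptwise
        _ = c N * m + ∫⁻ x, (B N).indicator (f N) x ∂μ := by
            rw [lintegral_add_left measurable_const, lintegral_const]
        _ = S N / 2 + ∫⁻ x, (B N).indicator (f N) x ∂μ := by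
            congr 1
            show S N / (2 * m) * m = S N / 2
            rw [div_eq_mul_inv, ENNReal.mul_inv (Or.inl two_ne_zero) (Or.inr hm_ne_zero),
              mul_assoc, mul_assoc, ENNReal.inv_mul_cancel hm_ne_zero hm_ne_top, mul_one,
              ← div_eq_mul_inv]
    have half_le : S N / 2 ≤ ∫⁻ x, (B N).indicator (f N) x ∂μ := by
      have := tsub_le_iff_left.2 hstep
      rwa [ENNReal.sub_half (hS_ne_top N)] at this
    calc (S N / 2) ^ 2 ≤ (∫⁻ x, (B N).indicator (f N) x ∂μ) ^ 2 := pow_le_pow_left' half_le 2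
      _ ≤ (∫⁻ x, f N x ^ 2 ∂μ) * μ (B N) := ks_cauchy_schwarz μ (f N) (hf_meas N) _ (hB_meas N)
      _ = T N * μ (B N) := by rw [hint2]
  -- pick frequent N with good ratio and S big
  set L : ℝ≥0∞ := liminf (fun N => T N / S N ^ 2) atTop with hL_def
  have hL_lt : L < L + 1 := ENNReal.lt_add_right hliminf.ne one_ne_zero
  have hc'_ne_top : L + 1 ≠ ⊤ := ENNReal.add_ne_top.2 ⟨hliminf.ne, ENNReal.one_ne_top⟩
  have hc'_ne_zero : L + 1 ≠ 0 := by simp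
  have hfreq : ∃ᶠ N in atTop, T N / S N ^ 2 < L + 1 := frequently_lt_of_liminf_lt (h := hL_lt)
  have hev : ∀ᶠ N in atTop, (1:ℝ≥0∞) ≤ S N :=
    (hS_top.eventually (lt_mem_nhds (by simp : (1:ℝ≥0∞) < ⊤))).mono fun N h => h.le
  set ε : ℝ≥0∞ := 4⁻¹ / (L + 1) with hε_def
  have hε_pos : 0 < ε := ENNReal.div_pos (by norm_num) hc'_ne_top
  have hμB : ∃ᶠ N in atTop, ε ≤ μ (B N) := by
    refine (hfreq.and_eventually hev).mono ?_
    rintro N ⟨hN1, hN2⟩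
    have hS0 : S N ≠ 0 := fun h => by simp [h] at hN2
    have hS2_ne0 : S N ^ 2 ≠ 0 := pow_ne_zero _ hS0
    have hS2_ne_top : S N ^ 2 ≠ ⊤ := ENNReal.pow_ne_top (hS_ne_top N)
    have hT_lt : T N < (L + 1) * S N ^ 2 :=
      (ENNReal.div_lt_iff (Or.inl hS2_ne0) (Or.inl hS2_ne_top)).1 hN1
    have h1 : S N ^ 2 * 4⁻¹ ≤ S N ^ 2 * ((L + 1) * μ (B N)) := by
      calc S N ^ 2 * 4⁻¹ = (S N / 2) ^ 2 := by
            rw [div_eq_mul_inv, mul_pow, ← ENNReal.inv_pow]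
            norm_num
        _ ≤ T N * μ (B N) := hkey N
        _ ≤ (L + 1) * S N ^ 2 * μ (B N) := mul_le_mul_left hT_lt.le _
        _ = S N ^ 2 * ((L + 1) * μ (B N)) := by ring
    have h2 : (4⁻¹ : ℝ≥0∞) ≤ (L + 1) * μ (B N) :=
      (ENNReal.mul_le_mul_iff_right hS2_ne0 hS2_ne_top).1 h1
    rw [hε_def]
    rw [ENNReal.div_le_iff hc'_ne_zero hc'_ne_top]
    rwa [mul_comm] at h2
  -- limsup of B has measure ≥ ε
  have hlimB : ε ≤ μ (limsup B atTop) :=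
    le_trans (le_limsup_of_frequently_le hμB) (ks_limsup_measure_le μ B hB_meas)
  -- limsup B ⊆ limsup A
  have hsub : limsup B atTop ⊆ limsup A atTop := by
    intro x hx
    by_contra hnot
    rw [mem_limsup_iff_frequently_mem, not_frequently] at hnot
    obtain ⟨K, hK⟩ := eventually_atTop.1 hnot
    have hbound : ∀ N, f N x ≤ (K : ℝ≥0∞) := by
      intro N
      calc f N x ≤ ∑ n ∈ Finset.range (max N K), (A n).indicator 1 x :=
            Finset.sum_le_sum_of_subset (Finset.range_subset_range.2 (le_max_left _ _))
        _ = ∑ n ∈ Finset.range K, (A n).indicator 1 x := by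
            refine (Finset.sum_subset (Finset.range_subset_range.2 (le_max_right _ _)) ?_).symm
            intro n _ hn
            rw [Finset.mem_range, not_lt] at hn
            exact Set.indicator_of_notMem (hK n hn) _
        _ ≤ ∑ _n ∈ Finset.range K, (1:ℝ≥0∞) := by
            refine Finset.sum_le_sum fun n _ => ?_
            by_cases hxn : x ∈ A n <;> simp [hxn]
        _ = (K : ℝ≥0∞) := by simp
    have hxfreq : ∃ᶠ N in atTop, x ∈ B N := mem_limsup_iff_frequently_mem.1 hx
    have hcev : ∀ᶠ N in atTop, (K : ℝ≥0∞) < c N :=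
      hc_top.eventually (lt_mem_nhds (ENNReal.natCast_lt_top K))
    obtain ⟨N, hN1, hN2⟩ := (hxfreq.and_eventually hcev).exists
    have hlt : c N < f N x := hN1
    exact lt_irrefl _ ((hN2.trans hlt).trans_le (hbound N))
  exact lt_of_lt_of_le hε_pos (hlimB.trans (measure_mono hsub))
end

section
/- Let Ω ⊂ P(ℝ^d) be a properly convex domain with Hilbert metric d_Ω. For any x in the closure of Ω and points q₁, q₂ ∈ Ω, if p lies on the open projective segment [q₁, x) inside Ω, then the Hilbert distance from p to the segment [q₂, x) is at most d_Ω(q₁, q₂). -/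
open Set
open scoped Classical

/-- The Hilbert (cross-ratio) distance between two points of a bounded open convex set,
computed from the parameters at which the line through `p` and `q` meets the boundary:
if `x = p + s•(q-p)` (with `s = sInf < 0`) and `y = p + u•(q-p)` (with `u = sSup > 1`)
are the boundary points, the cross-ratio is `((1-s)·u)/((-s)·(u-1))`. -/

noncomputable def hilbertDist {E : Type*} [AddCommGroup E] [Module ℝ E]
    (Ω : Set E) (p q : E) : ℝ :=
  if p = q then 0
  else
    Real.log
      (((1 - sInf {t : ℝ | p + t • (q - p) ∈ Ω}) * sSup {t : ℝ | p + t • (q - p) ∈ Ω}) /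
        ((0 - sInf {t : ℝ | p + t • (q - p) ∈ Ω}) *
          (sSup {t : ℝ | p + t • (q - p) ∈ Ω} - 1)))

/-- The segment `[q, x)` from `q` toward `x`, excluding `x`. -/
def segTo {E : Type*} [AddCommGroup E] [Module ℝ E] (q x : E) : Set E :=
  {z | ∃ t : ℝ, 0 ≤ t ∧ t < 1 ∧ z = (1 - t) • q + t • x}

section Aux

variable {E : Type*} [NormedAddCommGroup E] [NormedSpace ℝ E]

/-- A convex combination of a point of an open convex set and a point of the closure,
with positive weight on the interior point, stays in the set. -/
lemma combo_mem_of_open (Ω : Set E) (hΩo : IsOpen Ω) (hΩc : Convex ℝ Ω)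
    {w x : E} (hw : w ∈ Ω) (hx : x ∈ closure Ω) {t : ℝ} (ht0 : 0 ≤ t) (ht1 : t < 1) :
    (1 - t) • w + t • x ∈ Ω := by
  have h := hΩc.combo_interior_closure_mem_interior
    (by rwa [hΩo.interior_eq]) hx (by linarith : (0:ℝ) < 1 - t) ht0 (by ring)
  rwa [hΩo.interior_eq] at h

lemma param_set_bddAbove (Ω : Set E) (hΩb : Bornology.IsBounded Ω) {p q : E} (hpq : p ≠ q) :
    BddAbove {t : ℝ | p + t • (q - p) ∈ Ω} ∧ BddBelow {t : ℝ | p + t • (q - p) ∈ Ω} := by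
  obtain ⟨M, hM⟩ := hΩb.exists_norm_le
  have hqp : (0:ℝ) < ‖q - p‖ := by
    rw [norm_pos_iff, sub_ne_zero]; exact fun h => hpq h.symm
  have key : ∀ t ∈ {t : ℝ | p + t • (q - p) ∈ Ω}, |t| ≤ (M + ‖p‖) / ‖q - p‖ := by
    intro t ht
    rw [le_div_iff₀ hqp]
    have h1 : ‖t • (q - p)‖ ≤ ‖p + t • (q - p)‖ + ‖p‖ := by
      have := norm_add_le (p + t • (q - p)) (-p)
      simpa using this
    have h2 := hM _ ht
    rw [norm_smul, Real.norm_eq_abs] at h1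
    linarith
  constructor
  · exact ⟨(M + ‖p‖) / ‖q - p‖, fun t ht => (le_abs_self t).trans (key t ht)⟩
  · exact ⟨-((M + ‖p‖) / ‖q - p‖), fun t ht => neg_le_of_abs_le (key t ht)⟩

/-- Basic facts about the parameter set: sInf < 0 and sSup > 1. -/
lemma param_set_facts (Ω : Set E) (hΩo : IsOpen Ω) (hΩb : Bornology.IsBounded Ω)
    {p q : E} (hp : p ∈ Ω) (hq : q ∈ Ω) (hpq : p ≠ q) :
    sInf {t : ℝ | p + t • (q - p) ∈ Ω} < 0 ∧ 1 < sSup {t : ℝ | p + t • (q - p) ∈ Ω} := by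
  obtain ⟨hba, hbb⟩ := param_set_bddAbove Ω hΩb hpq
  set S := {t : ℝ | p + t • (q - p) ∈ Ω} with hS
  have hSopen : IsOpen S := by
    have : Continuous fun t : ℝ => p + t • (q - p) := by continuity
    exact hΩo.preimage this
  have h0 : (0:ℝ) ∈ S := by simp [hS, hp]
  have h1 : (1:ℝ) ∈ S := by simp [hS, hq]
  obtain ⟨ε, hε, hball⟩ := Metric.isOpen_iff.1 hSopen 0 h0
  obtain ⟨δ, hδ, hball'⟩ := Metric.isOpen_iff.1 hSopen 1 h1
  constructor
  · have hmem : -(ε/2) ∈ S := hball (by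
      rw [Metric.mem_ball, Real.dist_eq, sub_zero, abs_neg, abs_of_pos (by linarith)]; linarith)
    calc sInf S ≤ -(ε/2) := csInf_le hbb hmem
      _ < 0 := by linarith
  · have hmem : 1 + δ/2 ∈ S := hball' (by
      rw [Metric.mem_ball, Real.dist_eq, show (1 + δ/2) - 1 = δ/2 by ring,
        abs_of_pos (by linarith)]; linarith)
    calc (1:ℝ) < 1 + δ/2 := by linarith
      _ ≤ sSup S := le_csSup hba hmem

lemma hilbertDist_nonneg (Ω : Set E) (hΩo : IsOpen Ω) (hΩb : Bornology.IsBounded Ω)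
    {p q : E} (hp : p ∈ Ω) (hq : q ∈ Ω) : 0 ≤ hilbertDist Ω p q := by
  unfold hilbertDist
  split_ifs with h
  · exact le_refl 0
  · obtain ⟨ha, hb⟩ := param_set_facts Ω hΩo hΩb hp hq h
    set a := sInf {t : ℝ | p + t • (q - p) ∈ Ω}
    set b := sSup {t : ℝ | p + t • (q - p) ∈ Ω}
    apply Real.log_nonneg
    rw [le_div_iff₀ (by nlinarith)]
    nlinarith

end Aux

/-- Convexity property of the Hilbert metric: if `p` lies on the segment `[q₁, x)` with
`x` in the closure of the properly convex domain `Ω`, then the Hilbert distance from `p`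
to the segment `[q₂, x)` is at most `d_Ω(q₁, q₂)`. -/
theorem hilbertDist_convexity {E : Type*} [NormedAddCommGroup E] [NormedSpace ℝ E]
    (Ω : Set E) (hΩo : IsOpen Ω) (hΩc : Convex ℝ Ω) (hΩb : Bornology.IsBounded Ω)
    (x : E) (hx : x ∈ closure Ω) (q₁ q₂ : E) (hq₁ : q₁ ∈ Ω) (hq₂ : q₂ ∈ Ω)
    (p : E) (hp : p ∈ segTo q₁ x) :
    sInf ((fun z => hilbertDist Ω p z) '' segTo q₂ x) ≤ hilbertDist Ω q₁ q₂ := by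
  obtain ⟨t, ht0, ht1, hpdef⟩ := hp
  have hpΩ : p ∈ Ω := hpdef ▸ combo_mem_of_open Ω hΩo hΩc hq₁ hx ht0 ht1
  set z := (1 - t) • q₂ + t • x with hzdef
  have hzseg : z ∈ segTo q₂ x := ⟨t, ht0, ht1, rfl⟩
  have hzΩ : z ∈ Ω := combo_mem_of_open Ω hΩo hΩc hq₂ hx ht0 ht1
  -- the image is bounded below by 0
  have hbdd : BddBelow ((fun z => hilbertDist Ω p z) '' segTo q₂ x) := by
    refine ⟨0, ?_⟩
    rintro _ ⟨w, ⟨s, hs0, hs1, rfl⟩, rfl⟩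
    exact hilbertDist_nonneg Ω hΩo hΩb hpΩ (combo_mem_of_open Ω hΩo hΩc hq₂ hx hs0 hs1)
  refine csInf_le_of_le hbdd ⟨z, hzseg, rfl⟩ ?_
  by_cases hq : q₁ = q₂
  · subst hq
    have hpz : p = z := by rw [hpdef]
    show hilbertDist Ω p z ≤ hilbertDist Ω q₁ q₁
    rw [← hpz]
    unfold hilbertDist
    rw [if_pos rfl, if_pos rfl]
  · have hpz : p ≠ z := by
      intro h
      apply hq
      have : (1 - t) • q₁ = (1 - t) • q₂ := by
        have := h
        rw [hpdef, hzdef] at this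
        exact add_right_cancel this
      exact smul_right_injective E (by intro h'; exact absurd h' (by norm_num; linarith)) this
    -- inclusion of parameter sets
    have hsub : {s : ℝ | q₁ + s • (q₂ - q₁) ∈ Ω} ⊆ {s : ℝ | p + s • (z - p) ∈ Ω} := by
      intro s hs
      have hkey : p + s • (z - p) = (1 - t) • (q₁ + s • (q₂ - q₁)) + t • x := by
        rw [hpdef, hzdef]; module
      simpa only [mem_setOf_eq, hkey] using
        combo_mem_of_open Ω hΩo hΩc hs hx ht0 ht1
    obtain ⟨hAa, hAb⟩ := param_set_bddAbove Ω hΩb hq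
    obtain ⟨hBa, hBb⟩ := param_set_bddAbove Ω hΩb hpz
    obtain ⟨hainf, hbsup⟩ := param_set_facts Ω hΩo hΩb hq₁ hq₂ hq
    obtain ⟨hainf', hbsup'⟩ := param_set_facts Ω hΩo hΩb hpΩ hzΩ hpz
    set a := sInf {s : ℝ | q₁ + s • (q₂ - q₁) ∈ Ω}
    set b := sSup {s : ℝ | q₁ + s • (q₂ - q₁) ∈ Ω}
    set a' := sInf {s : ℝ | p + s • (z - p) ∈ Ω}
    set b' := sSup {s : ℝ | p + s • (z - p) ∈ Ω}
    have hAne : {s : ℝ | q₁ + s • (q₂ - q₁) ∈ Ω}.Nonempty := ⟨0, by simpa using hq₁⟩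
    have haa : a' ≤ a := csInf_le_csInf hBb hAne hsub
    have hbb : b ≤ b' := csSup_le_csSup hBa hAne hsub
    show hilbertDist Ω p z ≤ hilbertDist Ω q₁ q₂
    unfold hilbertDist
    rw [if_neg hpz, if_neg hq]
    apply Real.log_le_log
    · apply div_pos (by nlinarith) (by nlinarith)
    · have h1 : (1 - a') / (0 - a') ≤ (1 - a) / (0 - a) := by
        rw [div_le_div_iff₀ (by linarith) (by linarith)]
        nlinarith
      have h2 : b' / (b' - 1) ≤ b / (b - 1) := by
        rw [div_le_div_iff₀ (by linarith) (by linarith)]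
        nlinarith
      calc ((1 - a') * b') / ((0 - a') * (b' - 1))
          = ((1 - a') / (0 - a')) * (b' / (b' - 1)) := by rw [div_mul_div_comm]
        _ ≤ ((1 - a) / (0 - a)) * (b / (b - 1)) := by
            apply mul_le_mul h1 h2 (div_nonneg (by linarith) (by linarith))
              (div_nonneg (by linarith) (by linarith))
        _ = ((1 - a) * b) / ((0 - a) * (b - 1)) := by rw [div_mul_div_comm]
end

section
/- Let H : ℝ≥0 → ℝ≥0 be a non-decreasing continuous function satisfying: for every ε > 0 there exists λ₀ > 0 such that H(λs) ≤ s^ε H(λ) whenever s > 1 and λ > λ₀. Let φ : Γ → ℝ≥0 on a countable set Γ be such that the series ∑_γ e^{−sφ(γ)} has finite critical exponent δ. Then the modified series ∑_γ H(e^{φ(γ)}) e^{−sφ(γ)} converges for s > δ and has critical exponent exactly δ. -/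
open Set

/-- Patterson's auxiliary function: a slowly-varying, non-decreasing, continuous,
non-negative weight `H` does not change the critical exponent of the Poincaré series:
the weighted series `∑ H(e^{φ γ}) e^{-s φ γ}` converges for `s > δ` and diverges for
`0 < s < δ`. -/
theorem patterson_weight_preserves_critical_exponent {Γ : Type*} [Countable Γ]
    (H : ℝ → ℝ) (φ : Γ → ℝ) (δ : ℝ) (hφ : ∀ γ, 0 ≤ φ γ)
    (hH_nonneg : ∀ x ∈ Ici (0 : ℝ), 0 ≤ H x)
    (hH_pos : ∃ x : ℝ, 0 ≤ x ∧ 0 < H x)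
    (hH_mono : MonotoneOn H (Ici (0 : ℝ)))
    (hH_cont : ContinuousOn H (Ici (0 : ℝ)))
    (hH_slow : ∀ ε : ℝ, 0 < ε → ∃ lam₀ : ℝ, 0 < lam₀ ∧
      ∀ s lam : ℝ, 1 < s → lam₀ < lam → H (lam * s) ≤ s ^ ε * H lam)
    (hconv : ∀ s : ℝ, δ < s → Summable fun γ => Real.exp (-s * φ γ))
    (hdiv : ∀ s : ℝ, 0 < s → s < δ → ¬ Summable fun γ => Real.exp (-s * φ γ)) :
    (∀ s : ℝ, δ < s →
      Summable fun γ => H (Real.exp (φ γ)) * Real.exp (-s * φ γ)) ∧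
    (∀ s : ℝ, 0 < s → s < δ →
      ¬ Summable fun γ => H (Real.exp (φ γ)) * Real.exp (-s * φ γ)) := by
  constructor
  · -- Convergence for s > δ
    intro s hs
    set ε := (s - δ) / 2 with hεdef
    have hε : 0 < ε := by simp only [hεdef]; linarith
    obtain ⟨lam₀, hlam₀, hslow⟩ := hH_slow ε hε
    set L := max lam₀ 1 + 1 with hLdef
    have hL1 : (1 : ℝ) ≤ L := by
      have := le_max_right lam₀ (1 : ℝ); simp only [hLdef]; linarith
    have hLlam : lam₀ < L := by
      have := le_max_left lam₀ (1 : ℝ); simp only [hLdef]; linarith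
    have hL0 : (0 : ℝ) ≤ L := by linarith
    have key : ∀ γ, H (Real.exp (φ γ)) ≤ H L * Real.exp (ε * φ γ) := by
      intro γ
      have hx1 : (1 : ℝ) ≤ Real.exp (φ γ) := Real.one_le_exp (hφ γ)
      have hx0 : (0 : ℝ) ≤ Real.exp (φ γ) := by linarith
      have hHL : 0 ≤ H L := hH_nonneg L hL0
      have hexp1 : (1 : ℝ) ≤ Real.exp (ε * φ γ) :=
        Real.one_le_exp (mul_nonneg hε.le (hφ γ))
      rcases le_or_gt (Real.exp (φ γ)) L with hle | hlt
      · have h1 : H (Real.exp (φ γ)) ≤ H L := hH_mono hx0 hL0 hle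
        nlinarith
      · have hq : (1 : ℝ) < Real.exp (φ γ) / L := (one_lt_div (by linarith)).2 hlt
        have heq : L * (Real.exp (φ γ) / L) = Real.exp (φ γ) := by
          field_simp
        have h1 : H (Real.exp (φ γ)) ≤ (Real.exp (φ γ) / L) ^ ε * H L := by
          have := hslow (Real.exp (φ γ) / L) L hq hLlam
          rwa [heq] at this
        have h2 : (Real.exp (φ γ) / L) ^ ε ≤ (Real.exp (φ γ)) ^ ε := by
          apply Real.rpow_le_rpow (by positivity) _ hε.le
          rw [div_le_iff₀ (by linarith : (0:ℝ) < L)]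
          nlinarith
        have h3 : (Real.exp (φ γ)) ^ ε = Real.exp (ε * φ γ) := by
          rw [← Real.exp_mul, mul_comm]
        calc H (Real.exp (φ γ)) ≤ (Real.exp (φ γ) / L) ^ ε * H L := h1
          _ ≤ (Real.exp (φ γ)) ^ ε * H L := by nlinarith
          _ = H L * Real.exp (ε * φ γ) := by rw [h3]; ring
    have hsm : Summable fun γ => H L * Real.exp (-((s + δ) / 2) * φ γ) :=
      (hconv ((s + δ) / 2) (by linarith)).mul_left _
    apply Summable.of_nonneg_of_le _ _ hsm
    · intro γ
      have hx1 : (1 : ℝ) ≤ Real.exp (φ γ) := Real.one_le_exp (hφ γ)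
      exact mul_nonneg (hH_nonneg _ (mem_Ici.2 (by linarith))) (Real.exp_pos _).le
    · intro γ
      have h1 := key γ
      have h2 : (0 : ℝ) < Real.exp (-s * φ γ) := Real.exp_pos _
      calc H (Real.exp (φ γ)) * Real.exp (-s * φ γ)
          ≤ (H L * Real.exp (ε * φ γ)) * Real.exp (-s * φ γ) := by nlinarith
        _ = H L * Real.exp (-((s + δ) / 2) * φ γ) := by
            rw [mul_assoc, ← Real.exp_add]
            congr 2
            simp only [hεdef]; ring
  · -- Divergence for 0 < s < δ
    intro s hs hsδ hsum
    obtain ⟨x, hx0, hxpos⟩ := hH_pos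
    set A : Set Γ := {γ | Real.exp (φ γ) < x} with hAdef
    have hδ1 : δ < δ + 1 := by linarith
    have hsum1 := hconv (δ + 1) hδ1
    have hc : (0 : ℝ) < Real.exp (-(δ + 1) * Real.log x) := Real.exp_pos _
    have hev : ∀ᶠ γ in Filter.cofinite,
        Real.exp (-(δ + 1) * φ γ) < Real.exp (-(δ + 1) * Real.log x) :=
      hsum1.tendsto_cofinite_zero.eventually_lt_const hc
    have hfin : A.Finite := by
      apply (Filter.eventually_cofinite.mp hev).subset
      intro γ hγ
      simp only [hAdef, mem_setOf_eq] at hγ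
      have hxp : (0 : ℝ) < x := lt_of_le_of_lt (Real.exp_pos _).le hγ
      have hlt : φ γ < Real.log x := (Real.lt_log_iff_exp_lt hxp).2 hγ
      have : Real.exp (-(δ + 1) * Real.log x) < Real.exp (-(δ + 1) * φ γ) := by
        apply Real.exp_lt_exp.2
        nlinarith
      simp only [mem_setOf_eq, not_lt]
      linarith
    have hsub : Summable (fun γ : ↥Aᶜ => Real.exp (-s * φ γ)) := by
      apply Summable.of_nonneg_of_le (fun γ => (Real.exp_pos _).le) _
        ((hsum.subtype Aᶜ).mul_left (H x)⁻¹)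
      intro γ
      have hxle : x ≤ Real.exp (φ γ.1) := by
        have := γ.2
        simp only [hAdef, mem_compl_iff, mem_setOf_eq, not_lt] at this
        exact not_lt.1 this
      have hHle : H x ≤ H (Real.exp (φ γ.1)) :=
        hH_mono hx0 (le_trans hx0 hxle) hxle
      have h2 : (0 : ℝ) < Real.exp (-s * φ γ.1) := Real.exp_pos _
      rw [inv_mul_eq_div, le_div_iff₀ hxpos]
      simp only [Function.comp_apply]
      nlinarith
    exact hdiv s hs hsδ (hfin.summable_compl_iff.mp hsub)
end

section
/- Let Ω ⊂ P(ℝ^d) be a properly convex domain and Γ ⊂ Aut(Ω) a projectively visible subgroup. Fix a base point b₀ ∈ Ω. Then the full orbital limit set satisfies Λ_Ω(Γ) = closure(Γ·b₀) ∩ ∂Ω; i.e., the set of accumulation points of any single orbit in the boundary equals the union over all orbits. -/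
open Set Filter
open scoped Classical

/-- The full orbital limit set of the action of `G` on the domain `Ω`: boundary points
that are limits of an orbit `γ_n • p` for some `p ∈ Ω`. -/
def orbitalLimitSet {E : Type*} [NormedAddCommGroup E] [NormedSpace ℝ E]
    (G : Type*) [Group G] [MulAction G E] (Ω : Set E) : Set E :=
  {x | x ∈ frontier Ω ∧ ∃ p ∈ Ω, ∃ u : ℕ → G,
    Tendsto (fun n => u n • p) atTop (nhds x)}

section Aux

variable {E : Type*} [NormedAddCommGroup E] [NormedSpace ℝ E]

/-- Basic facts about the chord parameter set of a bounded open set. -/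
lemma chord_facts {Ω : Set E} (hΩo : IsOpen Ω) {R : ℝ}
    (hR : Ω ⊆ Metric.closedBall 0 R)
    {a b : E} (ha : a ∈ Ω) (hb : b ∈ Ω) (hab : a ≠ b) :
    sInf {t : ℝ | a + t • (b - a) ∈ Ω} < 0 ∧
    1 < sSup {t : ℝ | a + t • (b - a) ∈ Ω} ∧
    -(2 * R / ‖b - a‖) ≤ sInf {t : ℝ | a + t • (b - a) ∈ Ω} ∧
    sSup {t : ℝ | a + t • (b - a) ∈ Ω} ≤ 2 * R / ‖b - a‖ ∧
    a + (sInf {t : ℝ | a + t • (b - a) ∈ Ω}) • (b - a) ∈ closure Ω := by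
  set v : E := b - a with hv
  have hvne : v ≠ 0 := sub_ne_zero.2 (Ne.symm hab)
  have hvpos : 0 < ‖v‖ := norm_pos_iff.2 hvne
  set S : Set ℝ := {t : ℝ | a + t • v ∈ Ω} with hS
  have h0 : (0 : ℝ) ∈ S := by simp [hS, ha]
  have h1 : (1 : ℝ) ∈ S := by
    have : a + (1 : ℝ) • v = b := by simp [hv]
    simp only [hS, mem_setOf_eq, this]; exact hb
  have hbound : ∀ t ∈ S, |t| ≤ 2 * R / ‖v‖ := by
    intro t ht
    have h1' : ‖a + t • v‖ ≤ R := by simpa using hR ht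
    have h2 : ‖a‖ ≤ R := by simpa using hR ha
    have h3 : ‖t • v‖ ≤ 2 * R := by
      have heq : t • v = (a + t • v) - a := by abel
      rw [heq]
      calc ‖(a + t • v) - a‖ ≤ ‖a + t • v‖ + ‖a‖ := norm_sub_le _ _
        _ ≤ 2 * R := by linarith
    rw [norm_smul, Real.norm_eq_abs] at h3
    rw [le_div_iff₀ hvpos]
    exact h3
  have hBddB : BddBelow S := ⟨-(2 * R / ‖v‖), fun t ht => (abs_le.1 (hbound t ht)).1⟩
  have hBddA : BddAbove S := ⟨2 * R / ‖v‖, fun t ht => (abs_le.1 (hbound t ht)).2⟩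
  have hSopen : IsOpen S := by
    have : Continuous fun t : ℝ => a + t • v :=
      continuous_const.add (continuous_id.smul continuous_const)
    exact hΩo.preimage this
  have hSne : S.Nonempty := ⟨0, h0⟩
  obtain ⟨ε, hε, hball⟩ := Metric.isOpen_iff.1 hSopen 0 h0
  obtain ⟨ε', hε', hball'⟩ := Metric.isOpen_iff.1 hSopen 1 h1
  have hsneg : sInf S < 0 := by
    have hmem : -(ε / 2) ∈ S := by
      apply hball
      simp only [Metric.mem_ball, Real.dist_eq, sub_zero, abs_neg]
      rw [abs_of_pos (by linarith)]
      linarith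
    calc sInf S ≤ -(ε / 2) := csInf_le hBddB hmem
      _ < 0 := by linarith
  have hTgt : 1 < sSup S := by
    have hmem : 1 + ε' / 2 ∈ S := by
      apply hball'
      simp only [Metric.mem_ball, Real.dist_eq, add_sub_cancel_left]
      rw [abs_of_pos (by linarith)]
      linarith
    calc (1 : ℝ) < 1 + ε' / 2 := by linarith
      _ ≤ sSup S := le_csSup hBddA hmem
  refine ⟨hsneg, hTgt, ?_, ?_, ?_⟩
  · exact le_csInf hSne fun t ht => (abs_le.1 (hbound t ht)).1
  · exact csSup_le hSne fun t ht => (abs_le.1 (hbound t ht)).2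
  · obtain ⟨u, _, hu_tend, hu_mem⟩ := exists_seq_tendsto_sInf hSne hBddB
    have htend : Tendsto (fun n => a + u n • v) atTop (nhds (a + sInf S • v)) :=
      tendsto_const_nhds.add (hu_tend.smul_const v)
    exact mem_closure_of_tendsto htend (Eventually.of_forall fun n => hu_mem n)

/-- Lower bound on the Hilbert distance in terms of the endpoint parameters. -/
lemma hilbertDist_ge {E : Type*} [AddCommGroup E] [Module ℝ E] (Ω : Set E) {a b : E}
    (hab : a ≠ b)
    (hs : sInf {t : ℝ | a + t • (b - a) ∈ Ω} < 0)
    (hT : 1 < sSup {t : ℝ | a + t • (b - a) ∈ Ω}) :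
    Real.log (1 / ((0 - sInf {t : ℝ | a + t • (b - a) ∈ Ω}) *
        (sSup {t : ℝ | a + t • (b - a) ∈ Ω} - 1))) ≤ hilbertDist Ω a b := by
  rw [hilbertDist, if_neg hab]
  set s := sInf {t : ℝ | a + t • (b - a) ∈ Ω}
  set T := sSup {t : ℝ | a + t • (b - a) ∈ Ω}
  have hden : 0 < (0 - s) * (T - 1) := mul_pos (by linarith) (by linarith)
  have hnum : (1 : ℝ) ≤ (1 - s) * T := by nlinarith
  have h1 : 1 / ((0 - s) * (T - 1)) ≤ (1 - s) * T / ((0 - s) * (T - 1)) := by gcongr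
  exact Real.log_le_log (by positivity) h1

/-- The key divergence lemma: the Hilbert distance between two sequences in `Ω`
converging to distinct points `x ∈ ∂Ω` and `y`, with the open segment entering `Ω`,
tends to infinity. -/
lemma hilbert_tendsto_atTop {Ω : Set E} (hΩo : IsOpen Ω) (hΩc : Convex ℝ Ω)
    (hΩb : Bornology.IsBounded Ω) {a b : ℕ → E} (ha : ∀ n, a n ∈ Ω) (hb : ∀ n, b n ∈ Ω)
    {x y : E} (hx : x ∈ frontier Ω)
    (hta : Tendsto a atTop (nhds x)) (htb : Tendsto b atTop (nhds y)) (hxy : x ≠ y)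
    (hm : (2⁻¹ : ℝ) • x + (2⁻¹ : ℝ) • y ∈ Ω) :
    Tendsto (fun n => hilbertDist Ω (a n) (b n)) atTop atTop := by
  obtain ⟨R, hR⟩ := hΩb.subset_closedBall 0
  have hR0 : 0 ≤ R := by
    have h := hR (ha 0)
    simp only [Metric.mem_closedBall] at h
    exact le_trans dist_nonneg h
  have hxnotΩ : x ∉ interior Ω := hx.2
  set v : ℕ → E := fun n => b n - a n with hvdef
  have hv : Tendsto v atTop (nhds (y - x)) := htb.sub hta
  have hyx : 0 < ‖y - x‖ := norm_pos_iff.2 (sub_ne_zero.2 (Ne.symm hxy))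
  set δ : ℝ := ‖y - x‖ / 2 with hδdef
  have hδ : 0 < δ := by positivity
  have hδlt : δ < ‖y - x‖ := by rw [hδdef]; linarith
  have hev : ∀ᶠ n in atTop, δ ≤ ‖v n‖ :=
    ((hv.norm).eventually (eventually_gt_nhds hδlt)).mono fun n hn => hn.le
  set M : ℝ := 2 * R / δ with hM
  have hM0 : 0 ≤ M := by positivity
  set sfun : ℕ → ℝ := fun n => sInf {t : ℝ | a n + t • (b n - a n) ∈ Ω} with hsfun
  set Tfun : ℕ → ℝ := fun n => sSup {t : ℝ | a n + t • (b n - a n) ∈ Ω} with hTfun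
  have hfacts : ∀ᶠ n in atTop,
      sfun n < 0 ∧ 1 < Tfun n ∧ -M ≤ sfun n ∧ Tfun n ≤ M ∧
        a n + (sfun n) • (b n - a n) ∈ closure Ω := by
    filter_upwards [hev] with n hn
    have habn : a n ≠ b n := by
      intro h
      rw [hvdef] at hn
      simp only [h, sub_self, norm_zero] at hn
      linarith
    obtain ⟨h1, h2, h3, h4, h5⟩ := chord_facts hΩo hR (ha n) (hb n) habn
    have hle : 2 * R / ‖b n - a n‖ ≤ M := by
      rw [hM]
      exact div_le_div_of_nonneg_left (by linarith) hδ hn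
    exact ⟨h1, h2, le_trans (by linarith) h3, le_trans h4 hle, h5⟩
  -- sfun tends to 0
  have hclaim : ∀ ε > (0 : ℝ), ∀ᶠ n in atTop, -ε < sfun n := by
    intro ε hε
    by_contra hcon
    have hfreq : ∃ᶠ n in atTop, sfun n ≤ -ε := by
      rw [not_eventually] at hcon
      exact hcon.mono fun n hn => by linarith [not_lt.1 hn]
    obtain ⟨φ, hφ, hφ'⟩ := extraction_of_frequently_atTop (hfreq.and_eventually hfacts)
    have hmemIcc : ∀ n, sfun (φ n) ∈ Icc (-M) (-ε) := fun n =>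
      ⟨(hφ' n).2.2.2.1, (hφ' n).1⟩
    obtain ⟨sl, hslmem, ψ, hψ, hψtend⟩ :=
      (isCompact_Icc (a := -M) (b := -ε)).tendsto_subseq hmemIcc
    have hslneg : sl < 0 := lt_of_le_of_lt hslmem.2 (by linarith)
    set c : E := x + sl • (y - x) with hc
    have hφψ : Tendsto (fun n => φ (ψ n)) atTop atTop :=
      (hφ.comp hψ).tendsto_atTop
    have hctend : Tendsto (fun n => a (φ (ψ n)) + (sfun (φ (ψ n))) • (b (φ (ψ n)) - a (φ (ψ n))))
        atTop (nhds c) := by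
      apply Tendsto.add (hta.comp hφψ)
      exact Tendsto.smul hψtend ((htb.comp hφψ).sub (hta.comp hφψ))
    have hcmem : c ∈ closure Ω :=
      isClosed_closure.mem_of_tendsto hctend
        (Eventually.of_forall fun n => (hφ' (ψ n)).2.2.2.2.2)
    -- x is a strict combination of the interior point m and the closure point c
    have hDpos : (0 : ℝ) < 2⁻¹ - sl := by linarith
    have hDne : (2⁻¹ : ℝ) - sl ≠ 0 := ne_of_gt hDpos
    have hxint : x ∈ interior Ω := by
      have ha' : (0 : ℝ) < (-sl) / (2⁻¹ - sl) := div_pos (by linarith) hDpos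
      have hb' : (0 : ℝ) ≤ 2⁻¹ / (2⁻¹ - sl) := (div_pos (by norm_num) hDpos).le
      have hab' : (-sl) / (2⁻¹ - sl) + 2⁻¹ / (2⁻¹ - sl) = 1 := by
        rw [← add_div, div_eq_one_iff_eq hDne]; ring
      have hcomb := hΩc.combo_interior_closure_mem_interior
        (x := (2⁻¹ : ℝ) • x + (2⁻¹ : ℝ) • y) (y := c)
        (by rwa [hΩo.interior_eq]) hcmem ha' hb' hab'
      have heq : ((-sl) / (2⁻¹ - sl)) • ((2⁻¹ : ℝ) • x + (2⁻¹ : ℝ) • y) +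
          (2⁻¹ / (2⁻¹ - sl)) • c = x := by
        rw [hc]
        have h2 : (1:ℝ) - 2 * sl ≠ 0 := by intro h; nlinarith [h]
        match_scalars
        · field_simp [h2, show (1:ℝ) - sl * 2 ≠ 0 by rwa [mul_comm]]; ring
        · field_simp [h2]; ring
      rwa [heq] at hcomb
    exact hxnotΩ hxint
  have hs0 : Tendsto sfun atTop (nhds 0) := by
    rw [NormedAddCommGroup.tendsto_nhds_zero]
    intro ε hε
    filter_upwards [hclaim ε hε, hfacts] with n h1 h2
    rw [Real.norm_eq_abs, abs_lt]
    exact ⟨by linarith, by linarith [h2.1]⟩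
  -- the denominator tends to zero
  set den : ℕ → ℝ := fun n => (0 - sfun n) * (Tfun n - 1) with hden
  have hden_pos : ∀ᶠ n in atTop, 0 < den n := by
    filter_upwards [hfacts] with n hn
    exact mul_pos (by linarith [hn.1]) (by linarith [hn.2.1])
  have hden_le : ∀ᶠ n in atTop, den n ≤ (-sfun n) * M := by
    filter_upwards [hfacts] with n hn
    have h1 : Tfun n - 1 ≤ M := by linarith [hn.2.2.2.1]
    have h2 : 0 ≤ -sfun n := by linarith [hn.1]
    calc den n = (-sfun n) * (Tfun n - 1) := by rw [hden]; ring_nf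
      _ ≤ (-sfun n) * M := mul_le_mul_of_nonneg_left h1 h2
  have hrhs : Tendsto (fun n => (-sfun n) * M) atTop (nhds 0) := by
    have := (hs0.neg).mul_const M
    simpa using this
  have hden0 : Tendsto den atTop (nhds 0) :=
    squeeze_zero' (hden_pos.mono fun n hn => hn.le) hden_le hrhs
  have hdenW : Tendsto den atTop (nhdsWithin 0 (Ioi 0)) :=
    tendsto_nhdsWithin_iff.2 ⟨hden0, hden_pos⟩
  have hlog : Tendsto (fun n => Real.log (den n)) atTop atBot :=
    Real.tendsto_log_nhdsGT_zero.comp hdenW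
  have hneglog : Tendsto (fun n => -Real.log (den n)) atTop atTop :=
    tendsto_neg_atBot_atTop.comp hlog
  apply tendsto_atTop_mono' atTop _ hneglog
  filter_upwards [hfacts, hev] with n hn hvn
  have habn : a n ≠ b n := by
    intro h
    rw [hvdef] at hvn
    simp only [h, sub_self, norm_zero] at hvn
    linarith
  have := hilbertDist_ge Ω habn hn.1 hn.2.1
  calc -Real.log (den n) = Real.log (1 / den n) := by rw [one_div, Real.log_inv]
    _ ≤ hilbertDist Ω (a n) (b n) := this

end Aux

/-- For a projectively visible group `G` acting on a properly convex domain `Ω`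
(preserving `Ω`, continuously on the closure, by isometries of the Hilbert metric,
with limit set satisfying the visibility conditions: open segments between limit points
lie in `Ω`, and limit points are `C¹`-smooth, i.e. have a unique supporting hyperplane),
the full orbital limit set equals the boundary accumulation set of any single orbit:
`Λ_Ω(G) = closure(G·b₀) ∩ ∂Ω`. -/
theorem orbitalLimitSet_eq_closure_orbit_inter_frontier
    {E : Type*} [NormedAddCommGroup E] [NormedSpace ℝ E] [FiniteDimensional ℝ E]
    {G : Type*} [Group G] [MulAction G E]
    (Ω : Set E) (hΩo : IsOpen Ω) (hΩc : Convex ℝ Ω) (hΩb : Bornology.IsBounded Ω)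
    (hcont : ∀ g : G, ContinuousOn (fun x : E => g • x) (closure Ω))
    (hpres : ∀ g : G, ∀ x ∈ Ω, g • x ∈ Ω)
    (hiso : ∀ g : G, ∀ p ∈ Ω, ∀ q ∈ Ω,
      hilbertDist Ω (g • p) (g • q) = hilbertDist Ω p q)
    (hvis₁ : ∀ x ∈ orbitalLimitSet G Ω, ∀ y ∈ orbitalLimitSet G Ω, x ≠ y →
      openSegment ℝ x y ⊆ Ω)
    (hvis₂ : ∀ x ∈ orbitalLimitSet G Ω, ∀ f g : E →L[ℝ] ℝ, f ≠ 0 → g ≠ 0 →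
      (∀ y ∈ Ω, f y < f x) → (∀ y ∈ Ω, g y < g x) → ∃ c : ℝ, 0 < c ∧ f = c • g)
    (b₀ : E) (hb₀ : b₀ ∈ Ω) :
    orbitalLimitSet G Ω = closure (MulAction.orbit G b₀) ∩ frontier Ω := by
  ext x
  constructor
  · rintro ⟨hxf, p, hp, u, hu⟩
    refine ⟨?_, hxf⟩
    -- extract a convergent subsequence of the orbit of b₀
    have hcompact : IsCompact (closure Ω) := hΩb.isCompact_closure
    have hbmem : ∀ n, u n • b₀ ∈ closure Ω := fun n =>
      subset_closure (hpres (u n) b₀ hb₀)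
    obtain ⟨y, hyc, φ, hφ, hφtend⟩ := hcompact.tendsto_subseq hbmem
    have haseq : ∀ n, u (φ n) • p ∈ Ω := fun n => hpres _ _ hp
    have hbseq : ∀ n, u (φ n) • b₀ ∈ Ω := fun n => hpres _ _ hb₀
    have hatend : Tendsto (fun n => u (φ n) • p) atTop (nhds x) :=
      hu.comp hφ.tendsto_atTop
    have hbtend : Tendsto (fun n => u (φ n) • b₀) atTop (nhds y) := hφtend
    -- common contradiction machine
    have key : x ≠ y → (2⁻¹ : ℝ) • x + (2⁻¹ : ℝ) • y ∈ Ω → False := by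
      intro hxy hm
      have ht := hilbert_tendsto_atTop hΩo hΩc hΩb haseq hbseq hxf hatend hbtend hxy hm
      obtain ⟨n, hn⟩ := (ht.eventually_gt_atTop (hilbertDist Ω p b₀)).exists
      rw [hiso (u (φ n)) p hp b₀ hb₀] at hn
      exact lt_irrefl _ hn
    by_cases hyΩ : y ∈ Ω
    · exfalso
      have hxy : x ≠ y := by
        intro h
        exact hxf.2 (by rw [hΩo.interior_eq, h]; exact hyΩ)
      apply key hxy
      have := hΩc.combo_interior_closure_mem_interior
        (x := y) (y := x) (a := (2⁻¹ : ℝ)) (b := (2⁻¹ : ℝ))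
        (by rwa [hΩo.interior_eq]) hxf.1 (by norm_num) (by norm_num) (by norm_num)
      rw [hΩo.interior_eq] at this
      rwa [add_comm] at this
    · have hyf : y ∈ frontier Ω := ⟨hyc, by rwa [hΩo.interior_eq]⟩
      by_cases hxy : x = y
      · subst hxy
        exact mem_closure_of_tendsto hbtend
          (Eventually.of_forall fun n => MulAction.mem_orbit b₀ (u (φ n)))
      · exfalso
        have hyΛ : y ∈ orbitalLimitSet G Ω :=
          ⟨hyf, b₀, hb₀, fun n => u (φ n), hbtend⟩
        have hxΛ : x ∈ orbitalLimitSet G Ω := ⟨hxf, p, hp, u, hu⟩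
        have hseg := hvis₁ x hxΛ y hyΛ hxy
        apply key hxy
        exact hseg ⟨2⁻¹, 2⁻¹, by norm_num, by norm_num, by norm_num, rfl⟩
  · rintro ⟨hcl, hfr⟩
    refine ⟨hfr, b₀, hb₀, ?_⟩
    obtain ⟨f, hfmem, hftend⟩ := mem_closure_iff_seq_limit.1 hcl
    choose g hg using fun n => MulAction.mem_orbit_iff.1 (hfmem n)
    refine ⟨g, ?_⟩
    have : (fun n => g n • b₀) = f := funext fun n => hg n
    rwa [this]
end

section
/- Let X be a metric space with a continuous flow φ_t preserving a σ-finite Borel measure m. Suppose there exists a compact set K ⊂ X with nonempty interior, and suppose for m-almost every v ∈ X the time spent in K is finite: the set {t ∈ ℝ : φ_t(v) ∈ K} is bounded. If additionally the flow were ergodic with almost every orbit dense, then there would exist v₀ with X = closure(φ_ℝ(v₀)) and int(K) ⊂ φ_{[−T,T]}(v₀) for some T; hence if no open subset of X is homeomorphic to a subset of an interval, the flow is not ergodic. -/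
open Filter MeasureTheory Set

/-- Non-ergodicity from dissipativity: if a continuous measure-preserving flow on a
metric space spends only a bounded amount of time in a fixed compact set `K` with
nonempty interior (for a.e. point), and no nonempty open subset of `X` is contained in
a compact arc of a continuous curve, then it is not the case that almost every orbit
of the flow is dense. -/
theorem flow_not_almost_every_orbit_dense
    {X : Type*} [MetricSpace X] [MeasurableSpace X] [BorelSpace X]
    (φ : ℝ → X → X)
    (hφ_cont : Continuous fun p : ℝ × X => φ p.1 p.2)
    (hφ_zero : ∀ x, φ 0 x = x)
    (hφ_add : ∀ s t x, φ (s + t) x = φ s (φ t x))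
    (m : Measure X) [SigmaFinite m] (hm : m ≠ 0)
    (hinv : ∀ t : ℝ, MeasurePreserving (φ t) m m)
    (K : Set X) (hK : IsCompact K) (hK_int : (interior K).Nonempty)
    (hbdd : ∀ᵐ v ∂m, Bornology.IsBounded {t : ℝ | φ t v ∈ K})
    (hnot_curve : ∀ U : Set X, IsOpen U → U.Nonempty →
      ∀ c : ℝ → X, Continuous c → ∀ T : ℝ, ¬ U ⊆ c '' Set.Icc (-T) T) :
    ¬ (∀ᵐ v ∂m, Dense (Set.range fun t : ℝ => φ t v)) := by
  intro hdense
  haveI : (MeasureTheory.ae m).NeBot := ae_neBot.2 hm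
  obtain ⟨v₀, hbv, hdv⟩ := (hbdd.and hdense).exists
  obtain ⟨T, hT⟩ := (Metric.isBounded_iff_subset_closedBall 0).1 hbv
  rw [Real.closedBall_eq_Icc, zero_sub, zero_add] at hT
  set c : ℝ → X := fun t => φ t v₀ with hc_def
  have hc : Continuous c := hφ_cont.comp (continuous_id.prodMk continuous_const)
  have hS : IsClosed (c '' Set.Icc (-T) T) := (isCompact_Icc.image hc).isClosed
  apply hnot_curve (interior K) isOpen_interior hK_int c hc T
  intro x hx
  rw [← hS.closure_eq]
  rw [mem_closure_iff_nhds]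
  intro U hU
  obtain ⟨V, hVU, hVopen, hxV⟩ := mem_nhds_iff.1 hU
  have hOpen : IsOpen (V ∩ interior K) := hVopen.inter isOpen_interior
  obtain ⟨y, ⟨t, hty⟩, hyV, hyK⟩ := hdv.exists_mem_open hOpen ⟨x, hxV, hx⟩
  refine ⟨y, hVU hyV, ?_⟩
  have htK : φ t v₀ ∈ K := by show c t ∈ K; rw [hty]; exact interior_subset hyK
  exact ⟨t, hT htK, hty⟩
end

section
/- Let ν₁, ν₂ be finite Borel measures on a compact metric space Z, and suppose there is a collection S of 'basic sets' which (i) forms a neighborhood basis at every point of a set Λ of full ν₁-measure, (ii) satisfies a 5r-covering property (any union of basic sets is contained in a union of disjoint basic sets enlarged by a bounded factor, with ν_i-measures of the enlargements comparable to the originals by a uniform constant), and (iii) satisfies ν₁(B) ≤ C ν₂(B) for all basic sets B. Then ν₁(A) ≤ C' ν₂(A) for all Borel sets A ⊂ Z, for some constant C' depending only on C and the covering constants; in particular ν₁ is absolutely continuous with respect to ν₂. -/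
open MeasureTheory
open scoped ENNReal

/-- Measure comparison principle: let `ν₁, ν₂` be finite Borel measures on a compact
metric space and `B i ⊆ B' i` a family of measurable "basic sets" and their
"enlargements" such that (i) the basic sets form a neighborhood basis at every point of
a set `Λ` of full `ν₁`-measure, (ii) any union of basic sets is covered by the
enlargements of a pairwise-disjoint subfamily, with measures of enlargements comparable
to the originals by a uniform constant `D`, and (iii) `ν₁(B i) ≤ C ν₂(B i)` for all
basic sets.  Then `ν₁(A) ≤ C' ν₂(A)` for all Borel sets `A`, for some finite constant
`C'`; in particular `ν₁ ≪ ν₂`. -/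
theorem measure_comparison_from_basic_sets
    {Z : Type*} [MetricSpace Z] [CompactSpace Z] [MeasurableSpace Z] [BorelSpace Z]
    (ν₁ ν₂ : Measure Z) [IsFiniteMeasure ν₁] [IsFiniteMeasure ν₂]
    {ι : Type*} (B B' : ι → Set Z)
    (hB_meas : ∀ i, MeasurableSet (B i))
    (hB'_meas : ∀ i, MeasurableSet (B' i))
    (hB_sub : ∀ i, B i ⊆ B' i)
    (Λ : Set Z) (hΛ_full : ν₁ Λᶜ = 0)
    (hbasis : ∀ x ∈ Λ, ∀ U : Set Z, IsOpen U → x ∈ U →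
      ∃ i, B i ∈ nhds x ∧ B i ⊆ U)
    (D : ℝ≥0∞) (hD : D ≠ ⊤)
    (hcover : ∀ I : Set ι, ∃ J ⊆ I, (J.PairwiseDisjoint B) ∧
      (⋃ i ∈ I, B i) ⊆ ⋃ i ∈ J, B' i)
    (henl₁ : ∀ i, ν₁ (B' i) ≤ D * ν₁ (B i))
    (henl₂ : ∀ i, ν₂ (B' i) ≤ D * ν₂ (B i))
    (C : ℝ≥0∞) (hC : C ≠ ⊤)
    (hcomp : ∀ i, ν₁ (B i) ≤ C * ν₂ (B i)) :
    ∃ C' : ℝ≥0∞, C' ≠ ⊤ ∧ (∀ A : Set Z, MeasurableSet A → ν₁ A ≤ C' * ν₂ A) ∧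
      ν₁ ≪ ν₂ := by
  set K : ℝ≥0∞ := D * C with hK
  have hKne : K ≠ ⊤ := ENNReal.mul_ne_top hD hC
  -- Key estimate on open sets
  have key : ∀ U : Set Z, IsOpen U → ν₁ (U ∩ Λ) ≤ K * ν₂ U := by
    intro U hU
    set I : Set ι := {i | B i ⊆ U} with hI
    have hcov : U ∩ Λ ⊆ ⋃ i ∈ I, interior (B i) := by
      rintro x ⟨hxU, hxΛ⟩
      obtain ⟨i, hnb, hsub⟩ := hbasis x hxΛ U hU hxU
      exact Set.mem_biUnion hsub (mem_interior_iff_mem_nhds.2 hnb)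
    obtain ⟨T, hTI, hTc, hTeq⟩ :=
      TopologicalSpace.isOpen_biUnion_countable I (fun i => interior (B i))
        (fun i _ => isOpen_interior)
    obtain ⟨J, hJT, hJd, hJcov⟩ := hcover T
    have hJc : J.Countable := hTc.mono hJT
    have hJI : J ⊆ I := hJT.trans hTI
    have hUJ : U ∩ Λ ⊆ ⋃ j ∈ J, B' j := by
      refine fun x hx => hJcov ?_
      have : x ∈ ⋃ i ∈ T, interior (B i) := by rw [hTeq]; exact hcov hx
      obtain ⟨i, hiT, hxi⟩ := Set.mem_iUnion₂.1 this
      exact Set.mem_biUnion hiT (interior_subset hxi)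
    calc ν₁ (U ∩ Λ) ≤ ν₁ (⋃ j ∈ J, B' j) := measure_mono hUJ
      _ ≤ ∑' j : J, ν₁ (B' j) := measure_biUnion_le ν₁ hJc _
      _ ≤ ∑' j : J, K * ν₂ (B (j : ι)) := by
          refine ENNReal.tsum_le_tsum fun j => ?_
          calc ν₁ (B' (j : ι)) ≤ D * ν₁ (B (j : ι)) := henl₁ _
            _ ≤ D * (C * ν₂ (B (j : ι))) := mul_le_mul_right (hcomp _) _
            _ = K * ν₂ (B (j : ι)) := by rw [hK, mul_assoc]
      _ = K * ∑' j : J, ν₂ (B (j : ι)) := ENNReal.tsum_mul_left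
      _ = K * ν₂ (⋃ j ∈ J, B j) := by
          rw [measure_biUnion hJc hJd (fun j _ => hB_meas j)]
      _ ≤ K * ν₂ U := by
          refine mul_le_mul_right (measure_mono ?_) _
          exact Set.iUnion₂_subset fun j hj => hJI hj
  -- Main bound for arbitrary sets
  have main : ∀ A : Set Z, ν₁ A ≤ K * ν₂ A := by
    intro A
    have hA₁ : ν₁ A ≤ ν₁ (A ∩ Λ) := by
      calc ν₁ A ≤ ν₁ ((A ∩ Λ) ∪ Λᶜ) := measure_mono (by
            intro x hx
            by_cases hxΛ : x ∈ Λ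
            · exact Or.inl ⟨hx, hxΛ⟩
            · exact Or.inr hxΛ)
        _ ≤ ν₁ (A ∩ Λ) + ν₁ Λᶜ := measure_union_le _ _
        _ = ν₁ (A ∩ Λ) := by rw [hΛ_full, add_zero]
    rcases eq_or_ne K 0 with hK0 | hK0
    · have := key Set.univ isOpen_univ
      rw [hK0, zero_mul] at this ⊢
      exact hA₁.trans ((measure_mono (Set.inter_subset_inter_left _ (Set.subset_univ A))).trans
        (by simpa using this))
    · refine ENNReal.le_of_forall_pos_le_add fun ε hε hlt => ?_
      have hδ : (ε : ℝ≥0∞) / K ≠ 0 := by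
        simp [ENNReal.div_eq_zero_iff, hKne, hε.ne']
      obtain ⟨U, hAU, hUo, hUlt⟩ := A.exists_isOpen_lt_add (μ := ν₂)
        (measure_ne_top ν₂ A) hδ
      calc ν₁ A ≤ ν₁ (A ∩ Λ) := hA₁
        _ ≤ ν₁ (U ∩ Λ) := measure_mono (Set.inter_subset_inter_left _ hAU)
        _ ≤ K * ν₂ U := key U hUo
        _ ≤ K * (ν₂ A + ε / K) := mul_le_mul_right hUlt.le _
        _ = K * ν₂ A + K * (ε / K) := by rw [mul_add]
        _ = K * ν₂ A + ε := by rw [ENNReal.mul_div_cancel hK0 hKne]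
  refine ⟨K, hKne, fun A _ => main A, Measure.AbsolutelyContinuous.mk fun s hs h2 => ?_⟩
  have := main s
  rw [h2, mul_zero] at this
  exact le_antisymm this zero_le'
end

section
/- Let Γ be a countable group, φ : Γ → ℝ≥0 with finite Poincaré critical exponent δ, and suppose there exist a probability measure μ on a compact space X carrying a Γ-action, an open set W ⊂ X with γW ∩ W ≠ ∅ for only finitely many γ in a subgroup Γ₀ (say at most N, counted with multiplicity of covering), and a constant C with μ(γW) ≥ C e^{−δφ(γ)} μ(W) for all but finitely many γ ∈ Γ₀. If μ(W) > 0, then ∑_{γ∈Γ₀} e^{−δφ(γ)} ≤ N / (C μ(W)) < ∞; i.e., the Γ₀-Poincaré series converges at δ. -/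
open MeasureTheory
open scoped ENNReal

/-- Abstract entropy-drop mechanism: suppose `μ` is a `Γ`-invariant-type probability
measure on `X`, `W` is a measurable set of positive measure, each point of `X` lies in
at most `N` of the translates `γ • W` for `γ` in a subgroup `Γ₀`, and
`μ(γ • W) ≥ C e^{-δ φ(γ)} μ(W)` for all `γ ∈ Γ₀` outside a finite exceptional set `S`.
Then `∑_{γ ∈ Γ₀ \ S} e^{-δ φ(γ)} ≤ N / (C μ(W))`; in particular the `Γ₀`-Poincaré
series converges at `δ`. -/
theorem entropy_drop_mechanism
    {X : Type*} [MeasurableSpace X] {Γ : Type*} [Group Γ] [Countable Γ] [MulAction Γ X]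
    (hmeas : ∀ γ : Γ, Measurable fun x : X => γ • x)
    (μ : Measure X) [IsProbabilityMeasure μ]
    (φ : Γ → ℝ) (hφ : ∀ γ, 0 ≤ φ γ) (δ : ℝ)
    (Γ₀ : Subgroup Γ) (W : Set X) (hW_meas : MeasurableSet W) (hW_pos : 0 < μ W)
    (N : ℕ)
    (hmult : ∀ x : X,
      (∑' γ : Γ₀, W.indicator (fun _ => (1 : ℝ≥0∞)) ((γ : Γ)⁻¹ • x)) ≤ N)
    (C : ℝ) (hC : 0 < C) (S : Finset Γ₀)
    (hlow : ∀ γ : Γ₀, γ ∉ S →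
      C * Real.exp (-δ * φ (γ : Γ)) * (μ W).toReal ≤
        (μ ((fun x : X => (γ : Γ) • x) '' W)).toReal) :
    Summable (fun γ : Γ₀ => Real.exp (-δ * φ (γ : Γ))) ∧
      (∑' γ : {γ : Γ₀ // γ ∉ S}, Real.exp (-δ * φ ((γ : Γ₀) : Γ))) ≤
        N / (C * (μ W).toReal) := by
  classical
  set w : ℝ := (μ W).toReal with hw_def
  have hμW_ne : μ W ≠ ⊤ := measure_ne_top μ W
  have hw : 0 < w := ENNReal.toReal_pos hW_pos.ne' hμW_ne
  -- translate sets
  set T : Γ₀ → Set X := fun γ => (fun x : X => (γ : Γ)⁻¹ • x) ⁻¹' W with hT_def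
  have hT_meas : ∀ γ : Γ₀, MeasurableSet (T γ) := fun γ => (hmeas _) hW_meas
  have himg : ∀ γ : Γ₀, (fun x : X => (γ : Γ) • x) '' W = T γ := by
    intro γ
    ext x
    simp only [hT_def, Set.mem_image, Set.mem_preimage]
    constructor
    · rintro ⟨y, hy, rfl⟩; simpa [inv_smul_smul] using hy
    · intro h; exact ⟨(γ : Γ)⁻¹ • x, h, by simp [smul_inv_smul]⟩
  -- total mass bound
  have hsum_le : (∑' γ : Γ₀, μ (T γ)) ≤ N := by
    have h1 : ∀ γ : Γ₀, μ (T γ) = ∫⁻ x, (T γ).indicator (fun _ => (1 : ℝ≥0∞)) x ∂μ := by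
      intro γ
      rw [MeasureTheory.lintegral_indicator (hT_meas γ)]
      simp
    calc (∑' γ : Γ₀, μ (T γ))
        = ∑' γ : Γ₀, ∫⁻ x, (T γ).indicator (fun _ => (1 : ℝ≥0∞)) x ∂μ := by
          exact tsum_congr h1
      _ = ∫⁻ x, ∑' γ : Γ₀, (T γ).indicator (fun _ => (1 : ℝ≥0∞)) x ∂μ := by
          rw [MeasureTheory.lintegral_tsum]
          intro γ
          exact ((measurable_const.indicator (hT_meas γ))).aemeasurable
      _ ≤ ∫⁻ _x, (N : ℝ≥0∞) ∂μ := by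
          apply lintegral_mono
          intro x
          have := hmult x
          have heq : ∀ γ : Γ₀, (T γ).indicator (fun _ => (1 : ℝ≥0∞)) x
              = W.indicator (fun _ => (1 : ℝ≥0∞)) ((γ : Γ)⁻¹ • x) := by
            intro γ
            simp only [Set.indicator, hT_def, Set.mem_preimage]
          simpa [heq] using this
      _ = N := by simp
  -- lower bound in ENNReal over the subtype
  have hlow' : ∀ γ : {γ : Γ₀ // γ ∉ S},
      ENNReal.ofReal (C * w) * ENNReal.ofReal (Real.exp (-δ * φ ((γ : Γ₀) : Γ)))
        ≤ μ (T (γ : Γ₀)) := by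
    rintro ⟨γ, hγ⟩
    have h := hlow γ hγ
    rw [himg γ] at h
    have hTne : μ (T γ) ≠ ⊤ := measure_ne_top μ _
    have : ENNReal.ofReal (C * Real.exp (-δ * φ (γ : Γ)) * w) ≤ μ (T γ) := by
      rw [← ENNReal.ofReal_toReal hTne]
      exact ENNReal.ofReal_le_ofReal h
    calc ENNReal.ofReal (C * w) * ENNReal.ofReal (Real.exp (-δ * φ (γ : Γ)))
        = ENNReal.ofReal (C * Real.exp (-δ * φ (γ : Γ)) * w) := by
          rw [← ENNReal.ofReal_mul (by positivity)]
          ring_nf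
      _ ≤ μ (T γ) := this
  have hsub : (∑' γ : {γ : Γ₀ // γ ∉ S}, μ (T (γ : Γ₀))) ≤ N := by
    refine le_trans ?_ hsum_le
    exact ENNReal.tsum_comp_le_tsum_of_injective Subtype.val_injective _
  set c : ℝ≥0∞ := ENNReal.ofReal (C * w) with hc_def
  have hc0 : c ≠ 0 := by
    simp only [hc_def, ne_eq, ENNReal.ofReal_eq_zero, not_le]
    positivity
  have hcT : c ≠ ⊤ := ENNReal.ofReal_ne_top
  have hkey : c * (∑' γ : {γ : Γ₀ // γ ∉ S},
      ENNReal.ofReal (Real.exp (-δ * φ ((γ : Γ₀) : Γ)))) ≤ N := by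
    rw [← ENNReal.tsum_mul_left]
    exact le_trans (ENNReal.tsum_le_tsum hlow') hsub
  have hTle : (∑' γ : {γ : Γ₀ // γ ∉ S},
      ENNReal.ofReal (Real.exp (-δ * φ ((γ : Γ₀) : Γ)))) ≤ (N : ℝ≥0∞) / c := by
    rw [ENNReal.le_div_iff_mul_le (Or.inl hc0) (Or.inl hcT), mul_comm]
    exact hkey
  have hrhs_ne : (N : ℝ≥0∞) / c ≠ ⊤ :=
    (ENNReal.div_lt_top (by simp) hc0).ne
  have htsum_ne : (∑' γ : {γ : Γ₀ // γ ∉ S},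
      ENNReal.ofReal (Real.exp (-δ * φ ((γ : Γ₀) : Γ)))) ≠ ⊤ :=
    (lt_of_le_of_lt hTle hrhs_ne.lt_top).ne
  have hsummable_sub : Summable (fun γ : {γ : Γ₀ // γ ∉ S} =>
      Real.exp (-δ * φ ((γ : Γ₀) : Γ))) := by
    have := ENNReal.summable_toReal htsum_ne
    simpa [ENNReal.toReal_ofReal (Real.exp_nonneg _)] using this
  constructor
  · exact S.summable_compl_iff.mp hsummable_sub
  · have heq : (∑' γ : {γ : Γ₀ // γ ∉ S}, Real.exp (-δ * φ ((γ : Γ₀) : Γ)))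
        = (∑' γ : {γ : Γ₀ // γ ∉ S},
            ENNReal.ofReal (Real.exp (-δ * φ ((γ : Γ₀) : Γ)))).toReal := by
      rw [ENNReal.tsum_toReal_eq (fun _ => ENNReal.ofReal_ne_top)]
      simp [ENNReal.toReal_ofReal (Real.exp_nonneg _)]
    rw [heq]
    have := ENNReal.toReal_mono hrhs_ne hTle
    rwa [ENNReal.toReal_div, ENNReal.toReal_natCast, hc_def,
      ENNReal.toReal_ofReal (by positivity)] at this
end
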